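/- For every integer l ≥ 3, the currency B_l = (1, 2, 3, …, l−1, 2l−2, 2l−1, 4l−4) (with l + 2 coins: a_i = i + 1 for 0 ≤ i ≤ l − 2, a_{l−1} = 2l − 2, a_l = 2l − 1, a_{l+1} = 4l − 4) is orderly, while its prefix currency (1, 2, 3, …, l−1, 2l−2, 2l−1) is not orderly. -/

import Mathlib

/-!
Greedy is optimal as soon as `grd c ≤ grd (c - a) + 1` for every amount `c` and every coin
`a ≤ c`: removing the coins of any representation of `c` one at a time then shows that it has
at least `grd c` coins.

For `B_l` greedy first spends coins `4l - 4`, so `grd c = grd (c - (4l - 4)) + 1` above the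
top coin, while below it `grd` is given by an explicit table with values `0, …, 3`; the one-coin
inequality then reduces, by induction over multiples of `4l - 4`, to comparisons in that table.
Without the top coin, greedy pays `4l - 4 = 2 · (2l - 2)` as `(2l - 1) + (l - 1) + (l - 2)`.
-/

/-- The largest coin of the currency with coins `a 0, …, a k` that is `≤ c`
(or `0` if there is none). -/
def bestCoin (a : ℕ → ℕ) (k : ℕ) (c : ℕ) : ℕ :=
  ((Finset.range (k + 1)).filter fun j => a j ≤ c).sup a

/-- The number of coins used by the greedy algorithm to pay the amount `c`,
using the currency with coins `a 0, …, a k`. -/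
def grd (a : ℕ → ℕ) (k : ℕ) : ℕ → ℕ
  | 0 => 0
  | c + 1 =>
    if h : 1 ≤ bestCoin a k (c + 1) then
      grd a k (c + 1 - bestCoin a k (c + 1)) + 1
    else 0
  decreasing_by omega

/-- The minimal number of coins needed to pay the amount `c`,
using the currency with coins `a 0, …, a k`. -/
noncomputable def opt (a : ℕ → ℕ) (k : ℕ) (c : ℕ) : ℕ :=
  sInf {n | ∃ x : Fin (k + 1) → ℕ, (∑ i, x i) = n ∧ (∑ i, x i * a i.1) = c}

/-- `a 0, …, a k` is a currency: it starts with the coin `1` and is strictly increasing. -/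
def IsCurrency (a : ℕ → ℕ) (k : ℕ) : Prop :=
  a 0 = 1 ∧ ∀ i j : ℕ, i < j → j ≤ k → a i < a j

/-- The currency with coins `a 0, …, a k` is orderly: the greedy payment is
optimal for every positive amount. -/
def Orderly (a : ℕ → ℕ) (k : ℕ) : Prop :=
  ∀ c : ℕ, 0 < c → opt a k c = grd a k c

/-- The set `𝒜(a) = ⋃_{m ≥ 1} {m·a − l : 0 ≤ l ≤ m}`. -/
def calA (a : ℕ) : Set ℕ :=
  {x | ∃ m l : ℕ, 1 ≤ m ∧ l ≤ m ∧ x = m * a - l}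

open Finset

section Greedy

variable {a : ℕ → ℕ} {k c : ℕ}

lemma grd_zero (a : ℕ → ℕ) (k : ℕ) : grd a k 0 = 0 := by
  rw [grd]

lemma bestCoin_eq_of_mem {j v : ℕ} (hj : j ≤ k) (hv : a j = v) (hvc : v ≤ c)
    (hmax : ∀ i ≤ k, a i ≤ c → a i ≤ v) : bestCoin a k c = v := by
  refine le_antisymm (Finset.sup_le fun i hi => ?_) (hv ▸ Finset.le_sup ?_)
  · rw [mem_filter, mem_range] at hi
    exact hmax i (by omega) hi.2
  · rw [mem_filter, mem_range]
    exact ⟨by omega, hv ▸ hvc⟩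

lemma zero_mem_filter_le (h0 : a 0 = 1) (hc : 0 < c) :
    0 ∈ (range (k + 1)).filter fun j => a j ≤ c := by
  rw [mem_filter, mem_range]
  omega

lemma one_le_bestCoin (h0 : a 0 = 1) (hc : 0 < c) : 1 ≤ bestCoin a k c :=
  h0 ▸ le_sup (f := a) (zero_mem_filter_le h0 hc)

lemma exists_eq_bestCoin (h0 : a 0 = 1) (hc : 0 < c) :
    ∃ j ≤ k, a j = bestCoin a k c ∧ a j ≤ c := by
  obtain ⟨j, hj, hjmax⟩ := exists_mem_eq_sup _ ⟨0, zero_mem_filter_le h0 hc⟩ a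
  rw [mem_filter, mem_range] at hj
  exact ⟨j, by omega, hjmax.symm, hj.2⟩

lemma grd_eq_grd_sub_bestCoin_add_one (h0 : a 0 = 1) (hc : 0 < c) :
    grd a k c = grd a k (c - bestCoin a k c) + 1 := by
  obtain ⟨d, rfl⟩ : ∃ d, c = d + 1 := ⟨c - 1, by omega⟩
  rw [grd, dif_pos (one_le_bestCoin h0 hc)]

lemma bestCoin_succ_of_lt (h : c < a (k + 1)) : bestCoin a (k + 1) c = bestCoin a k c := by
  rw [bestCoin, bestCoin, range_add_one, filter_insert, if_neg (by omega)]

lemma grd_succ_of_lt (h : c < a (k + 1)) : grd a (k + 1) c = grd a k c := by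
  induction c using Nat.strong_induction_on with
  | _ c ih =>
    rcases c with _ | d
    · rw [grd_zero, grd_zero]
    · rw [grd, grd, bestCoin_succ_of_lt h]
      split_ifs with hb
      · rw [ih _ (by omega) (by omega)]
      · rfl

lemma sum_add_single (x : Fin (k + 1) → ℕ) (j : Fin (k + 1)) :
    ∑ i, (x + Pi.single j 1 : Fin (k + 1) → ℕ) i = ∑ i, x i + 1 := by
  simp [sum_add_distrib]

lemma sum_add_single_mul (x : Fin (k + 1) → ℕ) (j : Fin (k + 1)) :
    ∑ i, (x + Pi.single j 1 : Fin (k + 1) → ℕ) i * a i = ∑ i, x i * a i + a j := by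
  simp [add_mul, sum_add_distrib, Pi.single_apply]

lemma exists_sum_eq_grd (h0 : a 0 = 1) (c : ℕ) :
    ∃ x : Fin (k + 1) → ℕ, ∑ i, x i = grd a k c ∧ ∑ i, x i * a i = c := by
  induction c using Nat.strong_induction_on with
  | _ c ih =>
    rcases Nat.eq_zero_or_pos c with rfl | hc
    · exact ⟨0, by simp [grd_zero], by simp⟩
    obtain ⟨j, hjk, hj, hjc⟩ := exists_eq_bestCoin (k := k) h0 hc
    obtain ⟨x, hx, hxc⟩ := ih (c - a j) (by have := one_le_bestCoin (k := k) h0 hc; omega)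
    refine ⟨x + Pi.single ⟨j, by omega⟩ 1, ?_, ?_⟩
    · rw [sum_add_single, hx, grd_eq_grd_sub_bestCoin_add_one h0 hc, hj]
    · rw [sum_add_single_mul, hxc]
      exact Nat.sub_add_cancel hjc

lemma grd_le_sum_of_forall_grd_le_grd_sub_add_one
    (hexch : ∀ c, ∀ j ≤ k, a j ≤ c → grd a k c ≤ grd a k (c - a j) + 1)
    (x : Fin (k + 1) → ℕ) : grd a k (∑ i, x i * a i) ≤ ∑ i, x i := by
  induction hn : ∑ i, x i generalizing x with
  | zero =>
    have hx : x = 0 := funext fun i => by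
      simpa using (sum_eq_zero_iff.mp hn) i (mem_univ i)
    simp [hx, grd_zero]
  | succ n ih =>
    obtain ⟨j, hj⟩ : ∃ j, x j ≠ 0 := by
      by_contra! h
      simp [h] at hn
    set y := Function.update x j (x j - 1)
    have hxy : x = y + Pi.single j 1 := by
      ext i
      rcases eq_or_ne i j with rfl | hij
      · simp [y]
        omega
      · simp [y, hij]
    rw [hxy, sum_add_single] at hn
    rw [hxy, sum_add_single_mul]
    calc grd a k (∑ i, y i * a i + a j)
        ≤ grd a k (∑ i, y i * a i) + 1 := by
          simpa using hexch _ j (Nat.lt_succ_iff.mp j.2) le_add_self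
      _ ≤ n + 1 := by
          have := ih y (by omega)
          omega

lemma opt_le_sum (x : Fin (k + 1) → ℕ) : opt a k (∑ i, x i * a i) ≤ ∑ i, x i :=
  Nat.sInf_le ⟨x, rfl, rfl⟩

theorem orderly_of_forall_grd_le_grd_sub_add_one (h0 : a 0 = 1)
    (hexch : ∀ c, ∀ j ≤ k, a j ≤ c → grd a k c ≤ grd a k (c - a j) + 1) : Orderly a k := by
  intro c _
  obtain ⟨x, hx, rfl⟩ := exists_sum_eq_grd (k := k) h0 c
  refine le_antisymm (hx ▸ opt_le_sum x) (le_csInf ⟨_, x, rfl, rfl⟩ ?_)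
  rintro n ⟨y, rfl, hy⟩
  exact hy ▸ grd_le_sum_of_forall_grd_le_grd_sub_add_one hexch y

end Greedy

def currencyB (l : ℕ) : ℕ → ℕ := fun i =>
  if i ≤ l - 2 then i + 1 else if i = l - 1 then 2 * l - 2
  else if i = l then 2 * l - 1 else 4 * l - 4

def IsCoinB (l v : ℕ) : Prop :=
  (1 ≤ v ∧ v ≤ l - 1) ∨ v = 2 * l - 2 ∨ v = 2 * l - 1 ∨ v = 4 * l - 4

/-- Below `4l - 4`, greedy uses at most one coin `2l - 1` (or `2l - 2`), then at most one
coin `l - 1`, then at most one coin `< l - 1`. -/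
def grdBelowTopB (l c : ℕ) : ℕ :=
  if c = 0 then 0 else if c ≤ l - 1 then 1 else if c ≤ 2 * l - 3 then 2
  else if c ≤ 2 * l - 1 then 1 else if c ≤ 3 * l - 2 then 2 else 3

section CurrencyB

variable {l c : ℕ}

lemma currencyB_zero (l : ℕ) : currencyB l 0 = 1 := by
  simp [currencyB]

lemma isCoinB_currencyB (hl : 3 ≤ l) (i : ℕ) : IsCoinB l (currencyB l i) := by
  unfold IsCoinB currencyB
  split_ifs <;> omega

lemma exists_currencyB_eq (hl : 3 ≤ l) {v : ℕ} (hv : IsCoinB l v) :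
    ∃ j ≤ l + 1, currencyB l j = v := by
  unfold IsCoinB at hv
  rcases hv with hv | rfl | rfl | rfl
  · exact ⟨v - 1, by omega, by unfold currencyB; split_ifs <;> omega⟩
  · exact ⟨l - 1, by omega, by unfold currencyB; split_ifs <;> omega⟩
  · exact ⟨l, by omega, by unfold currencyB; split_ifs <;> omega⟩
  · exact ⟨l + 1, le_rfl, by unfold currencyB; split_ifs <;> omega⟩

lemma bestCoin_currencyB_eq (hl : 3 ≤ l) (v : ℕ) (hv : IsCoinB l v) (hvc : v ≤ c)
    (hmax : ∀ w, IsCoinB l w → w ≤ c → w ≤ v) : bestCoin (currencyB l) (l + 1) c = v := by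
  obtain ⟨j, hj, hjv⟩ := exists_currencyB_eq hl hv
  exact bestCoin_eq_of_mem hj hjv hvc fun i _ => hmax _ (isCoinB_currencyB hl i)

lemma bestCoin_currencyB (hl : 3 ≤ l) (hc : 0 < c) :
    (c ≤ l - 2 ∧ bestCoin (currencyB l) (l + 1) c = c) ∨
    (l - 1 ≤ c ∧ c ≤ 2 * l - 3 ∧ bestCoin (currencyB l) (l + 1) c = l - 1) ∨
    (c = 2 * l - 2 ∧ bestCoin (currencyB l) (l + 1) c = 2 * l - 2) ∨
    (2 * l - 1 ≤ c ∧ c < 4 * l - 4 ∧ bestCoin (currencyB l) (l + 1) c = 2 * l - 1) ∨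
    (4 * l - 4 ≤ c ∧ bestCoin (currencyB l) (l + 1) c = 4 * l - 4) := by
  have best := bestCoin_currencyB_eq (c := c) hl
  simp only [IsCoinB] at best
  by_cases h1 : c ≤ l - 2
  · exact .inl ⟨h1, best c (by omega) le_rfl (by omega)⟩
  by_cases h2 : c ≤ 2 * l - 3
  · exact .inr <| .inl ⟨by omega, h2, best (l - 1) (by omega) (by omega) (by omega)⟩
  by_cases h3 : c = 2 * l - 2
  · exact .inr <| .inr <| .inl ⟨h3, best _ (by omega) (by omega) (by omega)⟩
  by_cases h4 : c < 4 * l - 4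
  · refine .inr <| .inr <| .inr <| .inl ⟨by omega, h4, ?_⟩
    exact best (2 * l - 1) (by omega) (by omega) (by omega)
  · exact .inr <| .inr <| .inr <| .inr ⟨by omega, best _ (by omega) (by omega) (by omega)⟩

lemma grd_currencyB_of_lt (hl : 3 ≤ l) (hc : c < 4 * l - 4) :
    grd (currencyB l) (l + 1) c = grdBelowTopB l c := by
  induction c using Nat.strong_induction_on with
  | _ c ih =>
    rcases Nat.eq_zero_or_pos c with rfl | hpos
    · simp [grd_zero, grdBelowTopB]
    rw [grd_eq_grd_sub_bestCoin_add_one (currencyB_zero l) hpos]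
    have hb := bestCoin_currencyB hl hpos
    generalize bestCoin (currencyB l) (l + 1) c = b at hb
    rw [ih (c - b) (by omega) (by omega)]
    unfold grdBelowTopB
    split_ifs <;> omega

lemma grd_currencyB_of_le (hl : 3 ≤ l) (hc : 4 * l - 4 ≤ c) :
    grd (currencyB l) (l + 1) c = grd (currencyB l) (l + 1) (c - (4 * l - 4)) + 1 := by
  have hpos : 0 < c := by omega
  rw [grd_eq_grd_sub_bestCoin_add_one (currencyB_zero l) hpos]
  have hb := bestCoin_currencyB hl hpos
  rw [show bestCoin (currencyB l) (l + 1) c = 4 * l - 4 by omega]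

lemma grd_currencyB_le_grd_sub_add_one (hl : 3 ≤ l) {v : ℕ} (hv : IsCoinB l v) (hvc : v ≤ c) :
    grd (currencyB l) (l + 1) c ≤ grd (currencyB l) (l + 1) (c - v) + 1 := by
  induction c using Nat.strong_induction_on with
  | _ c ih =>
    unfold IsCoinB at hv
    by_cases hsub : 4 * l - 4 ≤ c - v
    · rw [grd_currencyB_of_le hl (by omega), grd_currencyB_of_le hl hsub,
        show c - v - (4 * l - 4) = c - (4 * l - 4) - v by omega]
      have := ih (c - (4 * l - 4)) (by omega) (by omega)
      omega
    by_cases htop : 4 * l - 4 ≤ c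
    · rw [grd_currencyB_of_le hl htop, grd_currencyB_of_lt hl (by omega),
        grd_currencyB_of_lt hl (by omega)]
      unfold grdBelowTopB
      split_ifs <;> omega
    · rw [grd_currencyB_of_lt hl (by omega), grd_currencyB_of_lt hl (by omega)]
      unfold grdBelowTopB
      split_ifs <;> omega

theorem orderly_currencyB (hl : 3 ≤ l) : Orderly (currencyB l) (l + 1) :=
  orderly_of_forall_grd_le_grd_sub_add_one (currencyB_zero l) fun _ j _ hjc =>
    grd_currencyB_le_grd_sub_add_one hl (isCoinB_currencyB hl j) hjc

theorem not_orderly_currencyB_prefix (hl : 3 ≤ l) : ¬ Orderly (currencyB l) l := by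
  have hbest : bestCoin (currencyB l) l (4 * l - 4) = 2 * l - 1 :=
    bestCoin_eq_of_mem le_rfl (by unfold currencyB; split_ifs <;> omega) (by omega)
      fun i _ _ => by unfold currencyB; split_ifs <;> omega
  have hgrd : grd (currencyB l) l (4 * l - 4) = 3 := by
    rw [grd_eq_grd_sub_bestCoin_add_one (currencyB_zero l) (by omega), hbest,
      ← grd_succ_of_lt (by unfold currencyB; split_ifs <;> omega),
      grd_currencyB_of_lt hl (by omega)]
    unfold grdBelowTopB
    split_ifs <;> omega
  have hopt : opt (currencyB l) l (4 * l - 4) ≤ 2 := by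
    have := opt_le_sum (a := currencyB l) (Pi.single (⟨l - 1, by omega⟩ : Fin (l + 1)) 2)
    simp only [Pi.single_apply, ite_mul, zero_mul, sum_ite_eq', mem_univ, if_true] at this
    rwa [currencyB, if_neg (by omega), if_pos rfl,
      show 2 * (2 * l - 2) = 4 * l - 4 by omega] at this
  intro h
  have := h (4 * l - 4) (by omega)
  omega

end CurrencyB

/-- For every `l ≥ 3` the currency
`B_l = (1, 2, …, l-1, 2l-2, 2l-1, 4l-4)` (with `l + 2` coins) is orderly, while
its prefix `(1, 2, …, l-1, 2l-2, 2l-1)` is not orderly. -/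
theorem B_family (l : ℕ) (hl : 3 ≤ l) :
    Orderly (fun i => if i ≤ l - 2 then i + 1 else if i = l - 1 then 2 * l - 2
      else if i = l then 2 * l - 1 else 4 * l - 4) (l + 1) ∧
    ¬ Orderly (fun i => if i ≤ l - 2 then i + 1 else if i = l - 1 then 2 * l - 2
      else if i = l then 2 * l - 1 else 4 * l - 4) l :=
  ⟨orderly_currencyB hl, not_orderly_currencyB_prefix hl⟩
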